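/- There exist two distinct synchronous relations R₀ and R₁ over Σ = {a,b} (namely R_i = {(u,v) : |u| > |v| and |u|−|v| ≡ i mod p} for fixed p ≥ 2) such that R₁ is a group relation, R₀ is not a group relation, yet R₀ and R₁ are recognized by the same finite naive synchronous algebra (synchronous algebra without dependency relation). -/

import Mathlib

/-- The paired alphabet `Σ₂⊥ = (Σ×Σ) ⊕ (Σ×{⊥}) ⊕ ({⊥}×Σ)`. -/
def PL (α : Type) : Type := (α × α) ⊕ α ⊕ α

/-- Well-formed words over `Σ₂⊥`. -/
def WF {α : Type} (l : List (PL α)) : Prop :=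
  ∃ (w : List (α × α)) (s : List α),
    l = w.map Sum.inl ++ s.map (fun a => Sum.inr (Sum.inl a)) ∨
    l = w.map Sum.inl ++ s.map (fun a => Sum.inr (Sum.inr a))

/-- Decode a word over `Σ₂⊥` into the pair of words it represents. -/
def decodeW {α : Type} (l : List (PL α)) : List α × List α :=
  (l.filterMap (fun x => match x with
      | Sum.inl p => some p.1
      | Sum.inr (Sum.inl a) => some a
      | Sum.inr (Sum.inr _) => none),
   l.filterMap (fun x => match x with
      | Sum.inl p => some p.2
      | Sum.inr (Sum.inl _) => none
      | Sum.inr (Sum.inr a) => some a))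

/-- A relation `R ⊆ α* × α*` is a group relation when there are a finite group
`G`, a monoid morphism `ψ : (Σ₂⊥)* → G` and `Acc ⊆ G` such that every
well-formed word encodes a pair of `R` iff its image under `ψ` lies in `Acc`. -/
def IsGroupRel {α : Type} (R : Set (List α × List α)) : Prop :=
  ∃ (G : Type) (_ : Group G) (_ : Finite G) (ψ : FreeMonoid (PL α) →* G)
    (Acc : Set G),
    ∀ l : List (PL α), WF l → (decodeW l ∈ R ↔ ψ (FreeMonoid.ofList l) ∈ Acc)

/-- The relation `R^{I,J}`: pairs `(u,v)` with `|u| > |v|` and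
`|u| − |v| mod p ∈ I`, or `|u| < |v|` and `|v| − |u| mod q ∈ J`. -/
def RIJ (α : Type) (p q : ℕ) (I : Set (ZMod p)) (J : Set (ZMod q)) :
    Set (List α × List α) :=
  { uv | (uv.2.length < uv.1.length ∧
            ((uv.1.length - uv.2.length : ℕ) : ZMod p) ∈ I) ∨
         (uv.1.length < uv.2.length ∧
            ((uv.2.length - uv.1.length : ℕ) : ZMod q) ∈ J) }

/-- Letter-types. -/
inductive LTy | l | p | q
deriving DecidableEq

/-- The five types of nonempty well-formed synchronous words. -/
inductive STy | ll | lllb | lb | llbl | bl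
deriving DecidableEq

namespace STy

def src : STy → LTy
  | ll => .l | lllb => .l | lb => .p | llbl => .l | bl => .q

def tgt : STy → LTy
  | ll => .l | lllb => .p | lb => .p | llbl => .q | bl => .q

/-- Compatibility of types. -/
def compat (σ τ : STy) : Prop := σ.tgt = τ.src ∨ σ.tgt = LTy.l

/-- Product of compatible types (junk on incompatible pairs). -/
def comp : STy → STy → STy
  | ll, ll => ll
  | ll, lllb => lllb
  | ll, lb => lllb
  | ll, llbl => llbl
  | ll, bl => llbl
  | lllb, _ => lllb
  | lb, _ => lb
  | llbl, _ => llbl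
  | bl, _ => bl

end STy

/-- Extended compatibility over `T ∪ {1}` (type `1` modelled by `none`). -/
def ncompat : Option STy → Option STy → Prop
  | none, _ => True
  | _, none => True
  | some σ, some τ => σ.compat τ

/-- Extended type product over `T ∪ {1}`. -/
def ncomp : Option STy → Option STy → Option STy
  | none, τ => τ
  | σ, none => σ
  | some σ, some τ => some (σ.comp τ)

/-- A naive synchronous algebra: a typed set over `T ∪ {1}` with an associative
partial product defined exactly on compatible pairs and a unique element of
type `1` which is a two-sided identity.  There is no dependency relation. -/
structure NaiveSyncAlg where
  A : Type
  ty : A → Option STy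
  mul : A → A → Option A
  one : A
  ty_one : ty one = none
  one_unique : ∀ x, ty x = none → x = one
  mul_defined : ∀ x y, (mul x y).isSome ↔ ncompat (ty x) (ty y)
  ty_mul : ∀ {x y z}, mul x y = some z → ty z = ncomp (ty x) (ty y)
  mul_assoc : ∀ x y z,
    (mul x y).bind (fun a => mul a z) = (mul y z).bind (fun b => mul x b)
  one_mul : ∀ x, mul one x = some x
  mul_one : ∀ x, mul x one = some x

/-- Synchronous words over `α`. -/
inductive SyncW (α : Type) : Type
  | wll : List (α × α) → SyncW α
  | wlllb : List (α × α) → List α → SyncW α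
  | wlb : List α → SyncW α
  | wllbl : List (α × α) → List α → SyncW α
  | wbl : List α → SyncW α

namespace SyncW

variable {α : Type}

/-- Concatenation of synchronous words (partial). -/
def mul : SyncW α → SyncW α → Option (SyncW α)
  | wll w, wll w' => some (wll (w ++ w'))
  | wll w, wlllb w' s => some (wlllb (w ++ w') s)
  | wll w, wlb s => some (wlllb w s)
  | wll w, wllbl w' s => some (wllbl (w ++ w') s)
  | wll w, wbl s => some (wllbl w s)
  | wlllb w s, wlb s' => some (wlllb w (s ++ s'))
  | wlb s, wlb s' => some (wlb (s ++ s'))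
  | wllbl w s, wbl s' => some (wllbl w (s ++ s'))
  | wbl s, wbl s' => some (wbl (s ++ s'))
  | _, _ => none

/-- Decoding into the represented pair of words. -/
def decode : SyncW α → List α × List α
  | wll w => (w.map Prod.fst, w.map Prod.snd)
  | wlllb w s => (w.map Prod.fst ++ s, w.map Prod.snd)
  | wlb s => (s, [])
  | wllbl w s => (w.map Prod.fst, w.map Prod.snd ++ s)
  | wbl s => ([], s)

/-- The naive type in `T ∪ {1}` of a synchronous word, determined by its
content: empty words have type `1`, and nonempty words get the type of their
underlying well-formed word. -/
def nty : SyncW α → Option STy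
  | wll [] => none
  | wll _ => some .ll
  | wlllb [] [] => none
  | wlllb [] _ => some .lb
  | wlllb _ [] => some .ll
  | wlllb _ _ => some .lllb
  | wlb [] => none
  | wlb _ => some .lb
  | wllbl [] [] => none
  | wllbl [] _ => some .bl
  | wllbl _ [] => some .ll
  | wllbl _ _ => some .llbl
  | wbl [] => none
  | wbl _ => some .bl

end SyncW

/-- The subset of `Sync(α)` induced by a relation. -/
def projS {α : Type} (R : Set (List α × List α)) : Set (SyncW α) :=
  { x | x.decode ∈ R }

/-- The relation `{(u,v) : |u| > |v| and |u| − |v| ≡ i mod p}`. -/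
def Rmod (p : ℕ) (i : ZMod p) : Set (List Bool × List Bool) :=
  { uv | uv.2.length < uv.1.length ∧
      ((uv.1.length - uv.2.length : ℕ) : ZMod p) = i }

/-!
Counting the letters `(a, ⊥)` and `(⊥, a)` of a well-formed word separately modulo `p` is a
morphism to the group `(ℤ/p)²`, and it decides `R_i` for `i ≢ 0`: a well-formed word has
padding letters of one kind only, and a count `≡ i ≢ 0` is positive. For `i ≡ 0` this fails
for every finite group: if the image of `(a, ⊥)` has order `n`, the empty word and `(a, ⊥)^{np}`
have the same image, while only the latter encodes a pair of `R₀`.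

In a naive algebra, by contrast, the empty word goes to the unit, of type `1`, and need not
collide with any element of type `lb`. Recording the type of a synchronous word together with
`|u| - |v| mod p` when that type is `lb` or `ll→lb` gives a finite naive algebra (`LenDiff p`)
recognising every `R_i`.
-/

lemma FreeMonoid.ofList_replicate {α : Type} (k : ℕ) (x : α) :
    FreeMonoid.ofList (List.replicate k x) = FreeMonoid.of x ^ k := by
  induction k with
  | zero => rfl
  | succ k ih => rw [List.replicate_succ, FreeMonoid.ofList_cons, ih, pow_succ']

namespace PL

variable {α : Type}

-- The letters `(a, b)`, `(a, ⊥)` and `(⊥, a)`.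
def both (x : α × α) : PL α := Sum.inl x
def onlyFst (a : α) : PL α := Sum.inr (Sum.inl a)
def onlySnd (a : α) : PL α := Sum.inr (Sum.inr a)

end PL

section GroupRel

variable {α : Type}

/- The body of `WF` elaborates its appends at `List ((α × α) ⊕ α ⊕ α)` but with result type
`List (PL α)`, which blocks rewriting; this restates it entirely at `List (PL α)`. -/
lemma WF.exists_eq {l : List (PL α)} (h : WF l) : ∃ (w : List (α × α)) (s : List α),
    l = w.map PL.both ++ s.map PL.onlyFst ∨ l = w.map PL.both ++ s.map PL.onlySnd := h

lemma decodeW_onlyFst (w : List (α × α)) (s : List α) :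
    decodeW (w.map PL.both ++ s.map PL.onlyFst) = (w.map Prod.fst ++ s, w.map Prod.snd) := by
  simp [decodeW, List.filterMap_map, Function.comp_def, PL.both, PL.onlyFst]

lemma decodeW_onlySnd (w : List (α × α)) (s : List α) :
    decodeW (w.map PL.both ++ s.map PL.onlySnd) = (w.map Prod.fst, w.map Prod.snd ++ s) := by
  simp [decodeW, List.filterMap_map, Function.comp_def, PL.both, PL.onlySnd]

def padCount (p : ℕ) : FreeMonoid (PL α) →* Multiplicative (ZMod p × ZMod p) :=
  FreeMonoid.lift fun
    | Sum.inl _ => 1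
    | Sum.inr (Sum.inl _) => Multiplicative.ofAdd (1, 0)
    | Sum.inr (Sum.inr _) => Multiplicative.ofAdd (0, 1)

lemma padCount_onlyFst (p : ℕ) (w : List (α × α)) (s : List α) :
    padCount p (FreeMonoid.ofList (w.map PL.both ++ s.map PL.onlyFst)) =
      Multiplicative.ofAdd ((s.length : ZMod p), 0) := by
  simp [padCount, FreeMonoid.lift_ofList, Function.comp_def, PL.both, PL.onlyFst, ← ofAdd_nsmul]

lemma padCount_onlySnd (p : ℕ) (w : List (α × α)) (s : List α) :
    padCount p (FreeMonoid.ofList (w.map PL.both ++ s.map PL.onlySnd)) =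
      Multiplicative.ofAdd (0, (s.length : ZMod p)) := by
  simp [padCount, FreeMonoid.lift_ofList, Function.comp_def, PL.both, PL.onlySnd, ← ofAdd_nsmul]

lemma IsGroupRel.exists_period {R : Set (List α × List α)} (hR : IsGroupRel R) (a : α) :
    ∃ n > 0, ∀ k m, (List.replicate k a, []) ∈ R ↔ (List.replicate (k + n * m) a, []) ∈ R := by
  obtain ⟨G, _, _, ψ, Acc, hψ⟩ := hR
  set g := ψ (FreeMonoid.of (PL.onlyFst a))
  have hpow : ∀ k, (List.replicate k a, []) ∈ R ↔ g ^ k ∈ Acc := by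
    intro k
    have hk := hψ ((List.replicate k a).map PL.onlyFst) ⟨[], _, Or.inl rfl⟩
    have hdecode := decodeW_onlyFst [] (List.replicate k a)
    simp only [List.map_nil, List.nil_append, List.map_replicate] at hdecode
    simpa only [hdecode, List.map_replicate, FreeMonoid.ofList_replicate, map_pow] using hk
  refine ⟨orderOf g, orderOf_pos g, fun k m => ?_⟩
  rw [hpow, hpow, pow_add, pow_mul, pow_orderOf_eq_one, one_pow, mul_one]

end GroupRel

section Rmod

variable {p : ℕ} [NeZero p]

lemma Rmod_injective : Function.Injective (Rmod p) := by
  intro i j hij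
  have hi : (List.replicate (i.val + p) true, []) ∈ Rmod p i := by
    simp [Rmod, NeZero.pos p]
  have hj := hi
  rw [hij] at hj
  exact hi.2.symm.trans hj.2

lemma isGroupRel_Rmod {i : ZMod p} (hi : i ≠ 0) : IsGroupRel (Rmod p i) := by
  refine ⟨_, inferInstance, inferInstance, padCount p, {Multiplicative.ofAdd (i, 0)}, ?_⟩
  intro l hl
  obtain ⟨w, s, rfl | rfl⟩ := hl.exists_eq
  · rw [decodeW_onlyFst, padCount_onlyFst]
    simp only [Rmod, Set.mem_ofPred_eq, List.length_map, List.length_append, lt_add_iff_pos_right,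
      add_tsub_cancel_left, Set.mem_singleton_iff, EmbeddingLike.apply_eq_iff_eq, Prod.mk.injEq,
      and_true, and_iff_right_iff_imp]
    intro h
    refine Nat.pos_of_ne_zero fun h0 => hi ?_
    rw [← h, h0, Nat.cast_zero]
  · rw [decodeW_onlySnd, padCount_onlySnd]
    simp [Rmod, hi.symm]

lemma not_isGroupRel_Rmod_zero : ¬ IsGroupRel (Rmod p 0) := by
  intro hR
  obtain ⟨n, hn, hper⟩ := hR.exists_period true
  simpa [Rmod, hn, NeZero.pos p] using hper 0 p

end Rmod

inductive LenDiff (p : ℕ) : Type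
  | one | ll | bl | llbl
  | lb (k : ZMod p)
  | lllb (k : ZMod p)

namespace LenDiff

variable {p : ℕ}

def ty : LenDiff p → Option STy
  | one => none
  | ll => some .ll
  | bl => some .bl
  | llbl => some .llbl
  | lb _ => some .lb
  | lllb _ => some .lllb

def mul : LenDiff p → LenDiff p → Option (LenDiff p)
  | one, x => some x
  | x, one => some x
  | ll, ll => some ll
  | ll, bl => some llbl
  | ll, llbl => some llbl
  | ll, lb k => some (lllb k)
  | ll, lllb k => some (lllb k)
  | lb k, lb j => some (lb (k + j))
  | lllb k, lb j => some (lllb (k + j))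
  | llbl, bl => some llbl
  | bl, bl => some bl
  | _, _ => none

def toSum : LenDiff p → Fin 4 ⊕ ZMod p ⊕ ZMod p
  | one => .inl 0
  | ll => .inl 1
  | bl => .inl 2
  | llbl => .inl 3
  | lb k => .inr (.inl k)
  | lllb k => .inr (.inr k)

lemma toSum_injective : Function.Injective (toSum (p := p)) := by
  rintro (_ | _ | _ | _ | _ | _) (_ | _ | _ | _ | _ | _) h <;> simp_all [toSum]

instance [NeZero p] : Finite (LenDiff p) := Finite.of_injective _ toSum_injective

end LenDiff

def lenDiffAlg (p : ℕ) : NaiveSyncAlg where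
  A := LenDiff p
  ty := LenDiff.ty
  mul := LenDiff.mul
  one := .one
  ty_one := rfl
  one_unique := by rintro (_ | _ | _ | _ | _ | _) h <;> simp_all [LenDiff.ty]
  mul_defined := by
    rintro (_ | _ | _ | _ | _ | _) (_ | _ | _ | _ | _ | _) <;>
      simp [LenDiff.mul, LenDiff.ty, ncompat, STy.compat, STy.src, STy.tgt]
  ty_mul := by
    rintro (_ | _ | _ | _ | _ | _) (_ | _ | _ | _ | _ | _) z h <;>
      simp only [LenDiff.mul, Option.some.injEq, reduceCtorEq] at h <;> subst h <;> rfl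
  mul_assoc := by
    rintro (_ | _ | _ | _ | _ | _) (_ | _ | _ | _ | _ | _) (_ | _ | _ | _ | _ | _) <;>
      simp [LenDiff.mul, add_assoc]
  one_mul _ := rfl
  mul_one x := by cases x <;> rfl

namespace SyncW

variable {α : Type}

def lenDiff (p : ℕ) : SyncW α → LenDiff p
  | wll [] | wlllb [] [] | wlb [] | wllbl [] [] | wbl [] => .one
  | wll (_ :: _) | wlllb (_ :: _) [] | wllbl (_ :: _) [] => .ll
  | wlllb [] s@(_ :: _) | wlb s@(_ :: _) => .lb s.length
  | wlllb (_ :: _) s@(_ :: _) => .lllb s.length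
  | wllbl [] (_ :: _) | wbl (_ :: _) => .bl
  | wllbl (_ :: _) (_ :: _) => .llbl

lemma ty_lenDiff (p : ℕ) (x : SyncW α) : (x.lenDiff p).ty = x.nty := by
  rcases x with (_ | _) | ⟨_ | _, _ | _⟩ | (_ | _) | ⟨_ | _, _ | _⟩ | (_ | _) <;> rfl

lemma lenDiff_mul (p : ℕ) {x y z : SyncW α} (h : x.mul y = some z) :
    (x.lenDiff p).mul (y.lenDiff p) = some (z.lenDiff p) := by
  rcases x with w | ⟨w, s⟩ | s | ⟨w, s⟩ | s <;>
    rcases y with w' | ⟨w', s'⟩ | s' | ⟨w', s'⟩ | s' <;>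
    simp only [SyncW.mul, Option.some.injEq, reduceCtorEq] at h <;>
    subst h <;>
    (try rcases w with _ | ⟨a, w⟩) <;> (try rcases s with _ | ⟨b, s⟩) <;>
    (try rcases w' with _ | ⟨a', w'⟩) <;> (try rcases s' with _ | ⟨b', s'⟩) <;>
    simp [lenDiff, LenDiff.mul] <;> ring

end SyncW

lemma projS_Rmod (p : ℕ) (i : ZMod p) :
    projS (Rmod p i) = SyncW.lenDiff p ⁻¹' {.lb i, .lllb i} := by
  ext x
  rcases x with w | ⟨w, s⟩ | s | ⟨w, s⟩ | s <;>
    (try rcases w with _ | ⟨a, w⟩) <;> (try rcases s with _ | ⟨b, s⟩) <;>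
    simp [projS, Rmod, SyncW.decode, SyncW.lenDiff]

/-- For `p ≥ 2`, the two distinct relations
`R_i = {(u,v) : |u| > |v|, |u|−|v| ≡ i mod p}` (`i = 0, 1`) over `Σ = {a,b}`
are such that `R₁` is a group relation, `R₀` is not, and yet both are recognized
by one and the same finite naive synchronous algebra (via a map from synchronous
words preserving naive types and products). -/
theorem naive_algebras_cannot_characterize_group_relations
    (p : ℕ) (hp : 2 ≤ p) :
    Rmod p 0 ≠ Rmod p 1 ∧
    IsGroupRel (Rmod p 1) ∧
    ¬ IsGroupRel (Rmod p 0) ∧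
    ∃ (N : NaiveSyncAlg) (_ : Finite N.A) (f : SyncW Bool → N.A),
      (∀ x, N.ty (f x) = x.nty) ∧
      (∀ x y z : SyncW Bool,
        SyncW.mul x y = some z → N.mul (f x) (f y) = some (f z)) ∧
      ∃ Acc₀ Acc₁ : Set N.A,
        projS (Rmod p 0) = f ⁻¹' Acc₀ ∧ projS (Rmod p 1) = f ⁻¹' Acc₁ := by
  have : NeZero p := ⟨by omega⟩
  have : Fact (1 < p) := ⟨hp⟩
  have hone : (1 : ZMod p) ≠ 0 := one_ne_zero
  exact ⟨Rmod_injective.ne hone.symm, isGroupRel_Rmod hone,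
    not_isGroupRel_Rmod_zero, lenDiffAlg p, inferInstanceAs (Finite (LenDiff p)),
    SyncW.lenDiff p, SyncW.ty_lenDiff p, fun _ _ _ => SyncW.lenDiff_mul p,
    _, _, projS_Rmod p 0, projS_Rmod p 1⟩
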